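/- arXiv:1912.10516 — 4 statements merged into one kernel-verified Lean document; each statement's English description precedes it below -/
import Mathlib

section
/- Let q be a prime power, n an odd positive integer, and s_1, …, s_n pairwise distinct q-even integers; write s = (s_1, …, s_n) and, for each j, let s^j denote the tuple obtained by omitting the j-th entry. Then for every integer D ≥ 0, the following identity holds in 𝔽_q(t): Σ_{σ ∈ S_n} sgn(σ)·ζ(D, σ(s)) = Σ_{j=1}^n (−1)^{n−j} ζ(D, (s_j)) · Σ_{σ ∈ S_n^j} sgn(σ)·ζ(D, σ(s^j)), where S_n is the symmetric group on {1, …, n}, S_n^j is the group of permutations of {1, …, n}∖{j}, and signs are viewed in 𝔽_q(t) via the canonical ring map from ℤ. -/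
/-!
Expanding every truncated zeta value as a sum over strictly decreasing degree tuples, both sides
become sums over all maps `g : Fin n → Fin D` of `ε(g) ∏ⱼ S_{g j}(s j)`: on the left
`ε(g) = sortSign g`, the sign of the permutation sorting `g` decreasingly (`0` if `g` is not
injective); on the right `ε(g) = ∑ⱼ (-1)ʲ sortSign (g ∘ j.succAbove)`, by inserting the degree of
the single zeta value at position `j`. Both weights are alternating in `g`, and an alternating
integer-valued function of tuples vanishes on non-injective tuples and is determined by its values
on strictly decreasing ones. There the first weight is `1`, and the second is `∑ⱼ (-1)ʲ = 1`
because `n` is odd.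
-/

noncomputable section

open scoped Classical

/-- `S_d(k) = Σ_{a monic of degree d} a^{-k} ∈ 𝔽_q(t)`. -/
def Sd {F : Type*} [Field F] (d : ℕ) (k : ℤ) : RatFunc F :=
  ∑ᶠ a ∈ {a : Polynomial F | a.Monic ∧ a.natDegree = d},
    (algebraMap (Polynomial F) (RatFunc F) a) ^ (-k)

/-- The truncated multiple zeta value `ζ(D, (s₁, …, s_r)) ∈ 𝔽_q(t)`, a finite sum over
tuples `D > d₁ > ⋯ > d_r ≥ 0`. -/
def zetaTrunc {F : Type*} [Field F] (D : ℕ) (w : List ℤ) : RatFunc F :=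
  ∑ᶠ d ∈ {d : Fin w.length → ℕ | StrictAnti d ∧ ∀ i, d i < D},
    ∏ i, Sd (d i) (w.get i)

/-- The tuple obtained from `s` by omitting its `j`-th entry. -/
def eraseIdxFun {α : Type*} {n : ℕ} (s : Fin n → α) (j : Fin n) (i : Fin (n - 1)) : α :=
  if h : (i : ℕ) < (j : ℕ) then s ⟨i, by omega⟩ else s ⟨(i : ℕ) + 1, by omega⟩

open Finset Function Equiv

theorem neg_one_pow_sub_of_even {R : Type*} [Ring R] {m j : ℕ} (hm : Even m) (hj : j ≤ m) :
    (-1 : R) ^ (m - j) = (-1) ^ j := by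
  rw [neg_one_pow_eq_pow_mod_two, neg_one_pow_eq_pow_mod_two (n := j)]
  have := Nat.even_iff.mp hm
  congr 1
  omega

theorem Equiv.Perm.exists_comp_succAbove {m : ℕ} (σ : Perm (Fin (m + 1))) (i : Fin (m + 1)) :
    ∃ τ : Perm (Fin m), σ ∘ i.succAbove = (σ i).succAbove ∘ τ ∧
      (Perm.sign τ : ℤ) = (-1) ^ (i : ℕ) * (-1) ^ (σ i : ℕ) * Perm.sign σ := by
  -- `ψ` fixes `0`, so it is the extension of a permutation `τ` of `Fin m`.
  set ψ := (σ i).cycleRange * σ * i.cycleRange⁻¹ with hψ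
  obtain ⟨⟨p, τ⟩, hpτ⟩ := Perm.decomposeFin.symm.surjective ψ
  obtain rfl : p = 0 := by simpa [hψ, Perm.inv_def] using congrArg (· 0) hpτ
  refine ⟨τ, funext fun k => (σ i).cycleRange.injective ?_, ?_⟩
  · have hk := congrArg (· k.succ) hpτ
    simp only [Perm.decomposeFin_symm_apply_succ, swap_self, refl_apply] at hk
    simp only [comp_apply, Fin.cycleRange_succAbove, hk, hψ, Perm.mul_apply, Perm.inv_def,
      Fin.cycleRange_symm_succ]
  · have hs := congrArg Perm.sign hpτ
    rw [Perm.decomposeFin.symm_sign, if_pos rfl, one_mul, hψ, map_mul, map_mul, Perm.sign_inv,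
      Fin.sign_cycleRange, Fin.sign_cycleRange] at hs
    rw [hs]
    push_cast
    ring

section Alternating

variable {α : Type*} {k m : ℕ}

def IsAlternating (Φ : (Fin k → α) → ℤ) : Prop :=
  ∀ (g : Fin k → α) (τ : Perm (Fin k)), Φ (g ∘ τ) = Perm.sign τ * Φ g

theorem IsAlternating.eq_zero_of_not_injective {Φ : (Fin k → α) → ℤ} (hΦ : IsAlternating Φ)
    {g : Fin k → α} (hg : ¬ Injective g) : Φ g = 0 := by
  obtain ⟨a, b, hab, hne⟩ := not_injective_iff.mp hg
  have hswap : g ∘ swap a b = g := by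
    funext x
    rcases eq_or_ne x a with rfl | hxa
    · simp [hab]
    rcases eq_or_ne x b with rfl | hxb
    · simp [hab]
    simp [swap_apply_of_ne_of_ne hxa hxb]
  have h := hΦ g (swap a b)
  rw [hswap, Perm.sign_swap hne] at h
  push_cast at h
  omega

variable [LinearOrder α]

/-- The sum has at most one term: it is the sign of the permutation sorting `g` into a strictly
decreasing tuple, and `0` when `g` is not injective. -/
def sortSign (g : Fin k → α) : ℤ :=
  ∑ σ ∈ univ.filter fun σ : Perm (Fin k) => StrictAnti (g ∘ σ), (Perm.sign σ : ℤ)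

theorem exists_strictAnti_comp_perm {g : Fin k → α} (hg : Injective g) :
    ∃ σ : Perm (Fin k), StrictAnti (g ∘ σ) :=
  ⟨Fin.revPerm.trans (Tuple.sort g),
    ((Tuple.monotone_sort g).strictMono_of_injective
      (hg.comp (Tuple.sort g).injective)).comp_strictAnti Fin.rev_strictAnti⟩

theorem IsAlternating.eq_of_eqOn_strictAnti {Φ Ψ : (Fin k → α) → ℤ} (hΦ : IsAlternating Φ)
    (hΨ : IsAlternating Ψ) (h : ∀ g, StrictAnti g → Φ g = Ψ g) : Φ = Ψ := by
  funext g
  by_cases hg : Injective g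
  · obtain ⟨σ, hσ⟩ := exists_strictAnti_comp_perm hg
    have hg' : g = (g ∘ σ) ∘ ⇑σ⁻¹ := by ext; simp
    rw [hg', hΦ, hΨ, h _ hσ]
  · rw [hΦ.eq_zero_of_not_injective hg, hΨ.eq_zero_of_not_injective hg]

theorem isAlternating_sortSign : IsAlternating (sortSign (α := α) (k := k)) := by
  intro g τ
  simp only [sortSign, sum_filter, mul_sum]
  refine Fintype.sum_equiv (Equiv.mulLeft τ) _ _ fun ρ => ?_
  rw [coe_mulLeft, mul_ite, mul_zero, Perm.sign_mul, Units.val_mul, ← mul_assoc, ← Units.val_mul,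
    Int.units_mul_self, Units.val_one, one_mul]
  simp only [Perm.coe_mul, comp_assoc]
  congr

theorem sortSign_of_strictAnti {g : Fin k → α} (hg : StrictAnti g) : sortSign g = 1 := by
  have key : ∀ σ : Perm (Fin k), StrictAnti (g ∘ σ) ↔ σ = 1 := by
    refine fun σ => ⟨fun hσ => ?_, fun hσ => by simpa [hσ] using hg⟩
    have hmono : StrictMono σ := fun a b hab => hg.lt_iff_gt.mp (hσ hab)
    exact Perm.ext fun x => congrFun hmono.eq_id x
  simp only [sortSign, key, filter_eq', mem_univ, if_true, sum_singleton, map_one, Units.val_one]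

theorem isAlternating_sum_neg_one_pow_mul_sortSign_comp_succAbove :
    IsAlternating fun G : Fin (m + 1) → α =>
      ∑ i : Fin (m + 1), (-1) ^ (i : ℕ) * sortSign (G ∘ i.succAbove) := by
  intro G σ
  have key : ∀ i : Fin (m + 1), (-1) ^ (i : ℕ) * sortSign ((G ∘ σ) ∘ i.succAbove)
      = Perm.sign σ * ((-1) ^ (σ i : ℕ) * sortSign (G ∘ (σ i).succAbove)) := by
    intro i
    obtain ⟨τ, hτ, hsign⟩ := σ.exists_comp_succAbove i
    rw [comp_assoc, hτ, ← comp_assoc, isAlternating_sortSign, hsign, ← mul_assoc, ← mul_assoc,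
      ← mul_assoc, ← pow_add, Even.neg_one_pow ⟨_, rfl⟩, one_mul]
    ring
  simp only [key, ← mul_sum]
  rw [Equiv.sum_comp σ fun i => (-1) ^ (i : ℕ) * sortSign (G ∘ i.succAbove)]

theorem sum_neg_one_pow_mul_sortSign_comp_succAbove (hm : Even m) (G : Fin (m + 1) → α) :
    ∑ i : Fin (m + 1), (-1) ^ (i : ℕ) * sortSign (G ∘ i.succAbove) = sortSign G := by
  refine congrFun (isAlternating_sum_neg_one_pow_mul_sortSign_comp_succAbove.eq_of_eqOn_strictAnti
    isAlternating_sortSign fun g hg => ?_) G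
  simp only [sortSign_of_strictAnti hg,
    sortSign_of_strictAnti (hg.comp_strictMono (Fin.strictMono_succAbove _)), mul_one]
  rw [Fin.sum_univ_eq_sum_range (fun i => (-1 : ℤ) ^ i), neg_one_geom_sum,
    if_neg (by simpa [Nat.even_add_one] using hm)]

end Alternating

section Expansion

variable {α : Type*} [LinearOrder α] [Fintype α] {R : Type*} [CommRing R] {k m : ℕ}

theorem sum_sign_smul_sum_strictAnti (v : Fin k → α → R) :
    ∑ σ : Perm (Fin k), (Perm.sign σ : ℤ) •
        ∑ d ∈ univ.filter fun d : Fin k → α => StrictAnti d, ∏ i, v (σ i) (d i)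
      = ∑ g : Fin k → α, sortSign g • ∏ i, v i (g i) := by
  have reindex : ∀ σ : Perm (Fin k),
      ∑ d ∈ univ.filter fun d : Fin k → α => StrictAnti d, ∏ i, v (σ i) (d i)
        = ∑ g ∈ univ.filter fun g : Fin k → α => StrictAnti (g ∘ σ), ∏ i, v i (g i) := by
    intro σ
    simp only [sum_filter]
    refine Fintype.sum_equiv (σ.arrowCongr (Equiv.refl α)) _ _ fun d => ?_
    have hd : σ.arrowCongr (Equiv.refl α) d ∘ σ = d := by ext; simp
    simp only [hd, ← Equiv.prod_comp σ (fun i => v i _)]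
    simp
  simp only [reindex, sortSign, smul_sum, sum_smul]
  exact sum_comm' fun _ _ => by simp

theorem sum_mul_sum_sortSign_smul_succAbove (v : Fin (m + 1) → α → R) (i : Fin (m + 1)) :
    (∑ a, v i a) * ∑ h : Fin m → α, sortSign h • ∏ k, v (i.succAbove k) (h k)
      = ∑ G : Fin (m + 1) → α, sortSign (G ∘ i.succAbove) • ∏ a, v a (G a) := by
  rw [sum_mul_sum, ← Fintype.sum_prod_type']
  refine Fintype.sum_equiv (Fin.insertNthEquiv (fun _ => α) i) _ _ fun ⟨a, h⟩ => ?_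
  have hcomp : Fin.insertNthEquiv (fun _ => α) i (a, h) ∘ i.succAbove = h := by ext; simp
  simp only [hcomp, Fin.insertNthEquiv_apply, Fin.prod_univ_succAbove _ i,
    Fin.insertNth_apply_same, Fin.insertNth_apply_succAbove, mul_smul_comm]

theorem sum_neg_one_pow_mul_sum_mul_sum_sortSign_smul (hm : Even m) (v : Fin (m + 1) → α → R) :
    ∑ i : Fin (m + 1), (-1) ^ (i : ℕ) *
        ((∑ a, v i a) * ∑ h : Fin m → α, sortSign h • ∏ k, v (i.succAbove k) (h k))
      = ∑ G : Fin (m + 1) → α, sortSign G • ∏ a, v a (G a) := by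
  simp_rw [sum_mul_sum_sortSign_smul_succAbove, mul_sum]
  rw [sum_comm]
  refine sum_congr rfl fun G _ => ?_
  rw [← sum_neg_one_pow_mul_sortSign_comp_succAbove hm G, sum_smul]
  refine sum_congr rfl fun i _ => ?_
  rw [mul_smul]
  simp only [zsmul_eq_mul, Int.cast_pow, Int.cast_neg, Int.cast_one]

end Expansion

section TruncatedZeta

variable {F : Type*} [Field F] (D : ℕ)

theorem zetaTrunc_eq_sum {k : ℕ} (w : List ℤ) (hw : w.length = k) :
    zetaTrunc (F := F) D w = ∑ d ∈ univ.filter fun d : Fin k → Fin D => StrictAnti d,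
      ∏ i, Sd (d i : ℕ) (w.get (Fin.cast hw.symm i)) := by
  subst hw
  have hset : {d : Fin w.length → ℕ | StrictAnti d ∧ ∀ i, d i < D}
      = (fun d : Fin w.length → Fin D => Fin.val ∘ d) ''
        ↑(univ.filter fun d : Fin w.length → Fin D => StrictAnti d) := by
    ext d
    simp only [Set.mem_ofPred_eq, coe_filter, mem_univ, true_and, Set.mem_image]
    refine ⟨fun ⟨hd, hD⟩ => ⟨fun i => ⟨d i, hD i⟩, fun _ _ h => hd h, rfl⟩, ?_⟩
    rintro ⟨d, hd, rfl⟩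
    exact ⟨Fin.val_strictMono.comp_strictAnti hd, fun i => (d i).isLt⟩
  rw [zetaTrunc, hset, finsum_mem_image (Fin.val_injective.comp_left.injOn),
    finsum_mem_coe_finset]
  rfl

theorem zetaTrunc_ofFn {k : ℕ} (f : Fin k → ℤ) :
    zetaTrunc (F := F) D (List.ofFn f) = ∑ d ∈ univ.filter fun d : Fin k → Fin D => StrictAnti d,
      ∏ i, Sd (d i : ℕ) (f i) := by
  simp [zetaTrunc_eq_sum D _ List.length_ofFn]

theorem zetaTrunc_singleton (x : ℤ) : zetaTrunc (F := F) D [x] = ∑ e : Fin D, Sd (e : ℕ) x := by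
  rw [zetaTrunc_eq_sum (k := 1) D [x] rfl,
    filter_true_of_mem fun d _ => Subsingleton.strictAnti d]
  exact Fintype.sum_equiv (Equiv.funUnique (Fin 1) (Fin D)) _ _ fun d => by simp

end TruncatedZeta

theorem eraseIdxFun_eq_comp_succAbove {α : Type*} {m : ℕ} (s : Fin (m + 1) → α)
    (j : Fin (m + 1)) : eraseIdxFun s j = s ∘ j.succAbove := by
  funext i
  simp only [eraseIdxFun, comp_apply]
  split_ifs with h
  · rw [Fin.succAbove_of_castSucc_lt _ _ h]; rfl
  · rw [Fin.succAbove_of_le_castSucc _ _ (not_lt.mp h)]; rfl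

theorem statement10_general {F : Type*} [Field F] (n : ℕ) (hodd : Odd n) (s : Fin n → ℤ) (D : ℕ) :
    ∑ σ : Equiv.Perm (Fin n),
        (Equiv.Perm.sign σ : ℤ) • zetaTrunc (F := F) D (List.ofFn (s ∘ σ))
      = ∑ j : Fin n, (-1 : RatFunc F) ^ (n - 1 - (j : ℕ)) *
          (zetaTrunc (F := F) D [s j] *
            ∑ σ : Equiv.Perm (Fin (n - 1)),
              (Equiv.Perm.sign σ : ℤ) •
                zetaTrunc (F := F) D (List.ofFn (eraseIdxFun s j ∘ σ))) := by
  obtain ⟨m, rfl⟩ : ∃ m, n = m + 1 := ⟨n - 1, by have := hodd.pos; omega⟩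
  have hm : Even m := by simpa [Nat.odd_add_one, Nat.not_odd_iff_even] using hodd
  let v : Fin (m + 1) → Fin D → RatFunc F := fun i e => Sd (e : ℕ) (s i)
  simp only [eraseIdxFun_eq_comp_succAbove, zetaTrunc_ofFn, zetaTrunc_singleton]
  refine (sum_sign_smul_sum_strictAnti v).trans
    ((sum_neg_one_pow_mul_sum_mul_sum_sortSign_smul hm v).symm.trans
      (sum_congr rfl fun j _ => ?_))
  rw [neg_one_pow_sub_of_even (m := m + 1 - 1) hm (by omega)]
  exact congrArg _ (congrArg _ (sum_sign_smul_sum_strictAnti fun k => v (j.succAbove k)).symm)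

theorem statement10 {F : Type*} [Field F] [Fintype F] (q : ℕ) (hq : Fintype.card F = q)
    (n : ℕ) (hodd : Odd n) (hpos : 0 < n)
    (s : Fin n → ℤ) (hinj : Function.Injective s)
    (heven : ∀ i, ((q : ℤ) - 1) ∣ s i) (D : ℕ) :
    ∑ σ : Equiv.Perm (Fin n),
        (Equiv.Perm.sign σ : ℤ) • zetaTrunc (F := F) D (List.ofFn (s ∘ σ))
      = ∑ j : Fin n, (-1 : RatFunc F) ^ (n - 1 - (j : ℕ)) *
          (zetaTrunc (F := F) D [s j] *
            ∑ σ : Equiv.Perm (Fin (n - 1)),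
              (Equiv.Perm.sign σ : ℤ) •
                zetaTrunc (F := F) D (List.ofFn (eraseIdxFun s j ∘ σ))) :=
  statement10_general n hodd s D

end
end

section
/- Let D be a finite linearly ordered set, S a set, R a commutative ring, and h : D × S → R any function. Let n be an odd positive integer and s_1, …, s_n pairwise distinct elements of S; write s = (s_1, …, s_n) and, for each j, let s^j denote the tuple obtained by omitting the j-th entry. Then Σ_{σ ∈ S_n} sgn(σ)·H(σ(s)) = Σ_{j=1}^n (−1)^{n−j} H((s_j)) · Σ_{σ ∈ S_n^j} sgn(σ)·H(σ(s^j)) in R, where S_n is the symmetric group on {1, …, n}, S_n^j is the group of permutations of {1, …, n}∖{j}, and signs are viewed in R via the canonical ring map from ℤ. -/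
/-!
STATEMENT 12: Let D be a finite linearly ordered set, S a set, R a commutative ring, and
h : D × S → R any function.  Let n be an odd positive integer and s₁, …, sₙ pairwise
distinct elements of S.  Then
Σ_{σ ∈ Sₙ} sgn(σ)·H(σ(s)) = Σ_{j=1}^n (−1)^{n−j} H((s_j)) · Σ_{σ ∈ Sₙ^j} sgn(σ)·H(σ(s^j)).
-/

noncomputable section

open scoped Classical

/-- The multiple harmonic type sum `H(s₁, …, s_r) ∈ R`, summing `h(d₁,s₁)⋯h(d_r,s_r)` over
all strictly decreasing tuples `d₁ > ⋯ > d_r` of elements of `D`. -/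
def Hsum {D S R : Type*} [LinearOrder D] [Fintype D] [CommRing R] (h : D → S → R)
    (w : List S) : R :=
  ∑ᶠ d ∈ {d : Fin w.length → D | StrictAnti d}, ∏ i, h (d i) (w.get i)

/-
Expanding `Hsum` over strictly decreasing tuples turns `∑ σ, sgn σ • H(s ∘ σ)` into the sum of
the determinants `det (h (e b) (s a))` over strictly decreasing `n`-tuples `e`. Expanding along the
first column, the right-hand side is the sum of the same determinants with columns `d, u₁, …, uₙ₋₁`
over all `d` and all strictly decreasing `u` of length `n - 1`. Terms with `d` among the `uᵢ`
vanish; the others correspond to pairs `(e, k)` by inserting `d` into `u` at position `k`, and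
moving column `k` to the front costs `(-1) ^ k`. As `n` is odd, `∑ k < n, (-1) ^ k = 1`.
-/

open Finset

def hMatrix {D S R : Type*} (h : D → S → R) {r : ℕ} (e : Fin r → D) (t : Fin r → S) :
    Matrix (Fin r) (Fin r) R :=
  Matrix.of fun a b => h (e b) (t a)

theorem hMatrix_comp_perm {D S R : Type*} (h : D → S → R) {r : ℕ} (e : Fin r → D)
    (t : Fin r → S) (σ : Equiv.Perm (Fin r)) :
    hMatrix h (e ∘ σ) t = (hMatrix h e t).submatrix id σ :=
  rfl

section Determinant

variable {D S R : Type*} [CommRing R] (h : D → S → R)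

theorem det_hMatrix_of_not_injective {r : ℕ} {e : Fin r → D} (t : Fin r → S)
    (he : ¬ Function.Injective e) : (hMatrix h e t).det = 0 := by
  obtain ⟨a, b, hab, hne⟩ : ∃ a b, e a = e b ∧ a ≠ b := by
    simpa [Function.Injective] using he
  exact Matrix.det_zero_of_column_eq hne fun c => by simp [hMatrix, hab]

theorem det_hMatrix_cons {m : ℕ} (d : D) (u : Fin m → D) (t : Fin (m + 1) → S) :
    (hMatrix h (Fin.cons d u) t).det
      = ∑ a : Fin (m + 1), (-1) ^ (a : ℕ) * h d (t a) * (hMatrix h u (a.removeNth t)).det := by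
  rw [Matrix.det_succ_column_zero]
  rfl

theorem det_hMatrix_cons_removeNth {m : ℕ} (e : Fin (m + 1) → D) (t : Fin (m + 1) → S)
    (k : Fin (m + 1)) :
    (hMatrix h (Fin.cons (e k) (k.removeNth e)) t).det = (-1) ^ (k : ℕ) * (hMatrix h e t).det := by
  rw [Fin.cons_removeNth_eq_comp_cycleRange_symm, hMatrix_comp_perm, Matrix.det_permute',
    Equiv.Perm.sign_symm, Fin.sign_cycleRange]
  push_cast
  ring

end Determinant

section

variable {D S R : Type*} [LinearOrder D] [Fintype D] [CommRing R]

variable (D) in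
def decreasingTuples (r : ℕ) : Finset (Fin r → D) :=
  {d | StrictAnti d}

theorem Hsum_ofFn (h : D → S → R) {r : ℕ} (f : Fin r → S) :
    Hsum h (List.ofFn f) = ∑ d ∈ decreasingTuples D r, ∏ i, h (d i) (f i) := by
  suffices ∀ (w : List S) (hw : w.length = r), (∀ i, w.get (Fin.cast hw.symm i) = f i) →
      Hsum h w = ∑ d ∈ decreasingTuples D r, ∏ i, h (d i) (f i) from
    this _ (List.length_ofFn) fun i => by simp
  rintro w rfl hf
  rw [Hsum, ← finsum_mem_coe_finset]
  simp [decreasingTuples, ← hf]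

theorem Hsum_singleton (h : D → S → R) (x : S) : Hsum h [x] = ∑ d, h d x := by
  rw [show [x] = List.ofFn fun _ : Fin 1 => x from rfl, Hsum_ofFn,
    show decreasingTuples D 1 = univ from filter_true_of_mem fun d _ i j hij => by omega]
  exact Fintype.sum_equiv (Equiv.funUnique (Fin 1) D) _ _ fun d => by simp

theorem sum_sign_smul_Hsum_eq_sum_det (h : D → S → R) {r : ℕ} (t : Fin r → S) :
    ∑ σ : Equiv.Perm (Fin r), (Equiv.Perm.sign σ : ℤ) • Hsum h (List.ofFn (t ∘ σ))
      = ∑ e ∈ decreasingTuples D r, (hMatrix h e t).det := by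
  simp_rw [Hsum_ofFn, smul_sum, Matrix.det_apply]
  rw [sum_comm]
  simp [hMatrix, Units.smul_def]

end

theorem eraseIdxFun_eq_removeNth {α : Type*} {m : ℕ} (s : Fin (m + 1) → α) (j : Fin (m + 1)) :
    eraseIdxFun s j = j.removeNth s := by
  ext i
  simp only [eraseIdxFun, Fin.removeNth, Fin.succAbove, Fin.lt_def, Fin.val_castSucc]
  split_ifs <;> rfl

theorem sum_neg_one_pow_fin {R : Type*} [Ring R] {m : ℕ} (hm : Even m) :
    ∑ k : Fin (m + 1), (-1 : R) ^ (k : ℕ) = 1 := by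
  rw [Fin.sum_univ_eq_sum_range (fun i => (-1 : R) ^ i), neg_one_geom_sum,
    if_neg (by simpa [Nat.even_add_one] using hm)]

section Insertion

variable {D : Type*} [LinearOrder D] {m : ℕ}

def insertionIdx (u : Fin m → D) (d : D) : Fin (m + 1) :=
  ⟨#{j | d < u j}, Nat.lt_succ_of_le ((card_filter_le _ _).trans_eq (card_fin m))⟩

theorem castSucc_lt_insertionIdx_iff {u : Fin m → D} (hu : StrictAnti u) (d : D) (i : Fin m) :
    i.castSucc < insertionIdx u d ↔ d < u i :=
  Fin.lt_card_filter_univ_iff_apply_of_imp (j := i) (fun j => d < u j)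
    fun _ _ hba (ha : d < u _) => ha.trans_le (hu.antitone hba)

theorem strictAnti_insertNth_insertionIdx {u : Fin m → D} (hu : StrictAnti u) {d : D}
    (hd : d ∉ Set.range u) : StrictAnti ((insertionIdx u d).insertNth d u) := by
  refine (Fin.strictMono_insertNth_iff (α := Dᵒᵈ) _ _ _).2
    ⟨hu, fun i hi => (castSucc_lt_insertionIdx_iff hu d i).1 hi, fun i hi => ?_⟩
  have hle : u i ≤ d := not_lt.1 fun h => (not_lt.2 hi) ((castSucc_lt_insertionIdx_iff hu d i).2 h)
  exact hle.lt_of_ne fun h => hd ⟨i, h⟩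

theorem insertionIdx_removeNth {e : Fin (m + 1) → D} (he : StrictAnti e) (k : Fin (m + 1)) :
    insertionIdx (k.removeNth e) (e k) = k := by
  have hfilter :
      ({j | e k < k.removeNth e j} : Finset (Fin m)) = ({j | (j : ℕ) < k} : Finset (Fin m)) := by
    ext j
    simp only [mem_filter, mem_univ, true_and, Fin.removeNth, he.lt_iff_gt,
      Fin.succAbove_lt_iff_castSucc_lt]
    rfl
  ext
  simp only [insertionIdx, hfilter, Fin.card_filter_val_lt]
  omega

end Insertion

section

variable {D S R : Type*} [LinearOrder D] [Fintype D]

theorem sum_decreasingTuples_sum_notMem_range {M : Type*} [AddCommMonoid M] {m : ℕ}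
    (F : (Fin m → D) → D → M) :
    ∑ u ∈ decreasingTuples D m, ∑ d ∈ {d | d ∉ Set.range u}, F u d
      = ∑ e ∈ decreasingTuples D (m + 1), ∑ k, F (k.removeNth e) (e k) := by
  simp only [decreasingTuples]
  rw [sum_sigma', sum_sigma']
  refine sum_nbij' (fun p => ⟨(insertionIdx p.1 p.2).insertNth p.2 p.1, insertionIdx p.1 p.2⟩)
    (fun q => ⟨q.2.removeNth q.1, q.1 q.2⟩) ?_ ?_ ?_ ?_ ?_
  · rintro ⟨u, d⟩ hp
    simp only [mem_sigma, mem_filter, mem_univ, true_and] at hp ⊢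
    exact ⟨strictAnti_insertNth_insertionIdx hp.1 hp.2, trivial⟩
  · rintro ⟨e, k⟩ hq
    simp only [mem_sigma, mem_filter, mem_univ, true_and, and_true] at hq ⊢
    refine ⟨hq.comp_strictMono (Fin.strictMono_succAbove k), ?_⟩
    rintro ⟨b, hb⟩
    exact Fin.succAbove_ne k b (hq.injective hb)
  · rintro ⟨u, d⟩ _
    simp
  · rintro ⟨e, k⟩ hq
    simp only [mem_sigma, mem_filter, mem_univ, true_and] at hq
    simp [insertionIdx_removeNth hq.1]
  · rintro ⟨u, d⟩ _
    simp

theorem sum_decreasingTuples_sum_det_hMatrix_cons [CommRing R] (h : D → S → R) {m : ℕ}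
    (hm : Even m) (t : Fin (m + 1) → S) :
    ∑ u ∈ decreasingTuples D m, ∑ d, (hMatrix h (Fin.cons d u) t).det
      = ∑ e ∈ decreasingTuples D (m + 1), (hMatrix h e t).det := by
  calc
    _ = ∑ u ∈ decreasingTuples D m, ∑ d ∈ {d | d ∉ Set.range u},
          (hMatrix h (Fin.cons d u) t).det := by
      refine sum_congr rfl fun u _ => (sum_filter_of_ne fun d _ hdet => ?_).symm
      exact fun hd =>
        hdet (det_hMatrix_of_not_injective h t fun hinj => (Fin.cons_injective_iff.1 hinj).1 hd)
    _ = ∑ e ∈ decreasingTuples D (m + 1),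
          ∑ k : Fin (m + 1), (-1) ^ (k : ℕ) * (hMatrix h e t).det := by
      simp only [sum_decreasingTuples_sum_notMem_range, det_hMatrix_cons_removeNth]
    _ = _ := by simp only [← sum_mul, sum_neg_one_pow_fin hm, one_mul]

end

theorem statement12_general {D S R : Type*} [LinearOrder D] [Fintype D] [CommRing R]
    (h : D → S → R) (n : ℕ) (hodd : Odd n)
    (s : Fin n → S) :
    ∑ σ : Equiv.Perm (Fin n),
        (Equiv.Perm.sign σ : ℤ) • Hsum h (List.ofFn (s ∘ σ))
      = ∑ j : Fin n, (-1 : R) ^ (n - 1 - (j : ℕ)) *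
          (Hsum h [s j] *
            ∑ σ : Equiv.Perm (Fin (n - 1)),
              (Equiv.Perm.sign σ : ℤ) • Hsum h (List.ofFn (eraseIdxFun s j ∘ σ))) := by
  obtain ⟨m, rfl⟩ : ∃ m, n = m + 1 := ⟨n - 1, (Nat.sub_add_cancel hodd.pos).symm⟩
  have hm : Even m := by simpa [Nat.odd_add_one] using hodd
  have hsign : ∀ j : Fin (m + 1), (-1 : R) ^ (m + 1 - 1 - (j : ℕ)) = (-1) ^ (j : ℕ) := by
    intro j
    rw [neg_one_pow_eq_pow_mod_two, neg_one_pow_eq_pow_mod_two (n := (j : ℕ))]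
    obtain ⟨t, rfl⟩ := hm
    congr 1
    omega
  rw [sum_sign_smul_Hsum_eq_sum_det, ← sum_decreasingTuples_sum_det_hMatrix_cons h hm]
  simp only [sum_sign_smul_Hsum_eq_sum_det, Hsum_singleton, eraseIdxFun_eq_removeNth,
    det_hMatrix_cons, hsign, mul_sum, sum_mul]
  rw [sum_comm (s := univ)]
  refine sum_congr rfl fun u _ => ?_
  rw [sum_comm (s := univ)]
  simp only [mul_assoc]

theorem statement12 {D S R : Type*} [LinearOrder D] [Fintype D] [CommRing R]
    (h : D → S → R) (n : ℕ) (hodd : Odd n) (hpos : 0 < n)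
    (s : Fin n → S) (hinj : Function.Injective s) :
    ∑ σ : Equiv.Perm (Fin n),
        (Equiv.Perm.sign σ : ℤ) • Hsum h (List.ofFn (s ∘ σ))
      = ∑ j : Fin n, (-1 : R) ^ (n - 1 - (j : ℕ)) *
          (Hsum h [s j] *
            ∑ σ : Equiv.Perm (Fin (n - 1)),
              (Equiv.Perm.sign σ : ℤ) • Hsum h (List.ofFn (eraseIdxFun s j ∘ σ))) :=
  statement12_general h n hodd s

end
end

section
/- Let n be an odd positive integer and s_1, …, s_n pairwise distinct integers with s_i ≥ 2 for all i; write s = (s_1, …, s_n) and, for each j, let s^j denote the tuple obtained by omitting the j-th entry. Then in ℝ: Σ_{σ ∈ S_n} sgn(σ)·ζ(σ(s)) = Σ_{j=1}^n (−1)^{n−j} ζ(s_j) · Σ_{σ ∈ S_n^j} sgn(σ)·ζ(σ(s^j)), where ζ denotes the classical real multiple zeta value, S_n is the symmetric group on {1, …, n}, and S_n^j is the group of permutations of {1, …, n}∖{j}. -/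
/-!
Write each multiple zeta value as a sum over strictly decreasing tuples `d` of positive
integers. The alternating sum over `σ` then becomes `∑_d det (d_j ^ (-s_i))`, and after expanding
the determinant along its first column the right-hand side becomes the sum, over `m ≥ 1` and
decreasing tuples `d'` of length `n - 1`, of the determinant for the tuple `(m, d')`. That
determinant vanishes when `m = 0` or `m` occurs in `d'`; otherwise inserting `m` into `d'` at its
place `k` gives a decreasing tuple `d`, and moving the column back costs `(-1) ^ k`. Every `d`
arises once for each position `k < n`, so the right-hand side is `∑_d det · ∑_{k < n} (-1) ^ k`,
and the inner sum is `1` because `n` is odd. Absolute convergence justifies the rearrangements.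
-/

noncomputable section

open scoped Classical

/-- The classical real multiple zeta value `ζ(s₁, …, s_r) ∈ ℝ`, the sum of the convergent
series over strictly decreasing tuples `n₁ > n₂ > ⋯ > n_r ≥ 1` of positive integers. -/
def zetaR (w : List ℤ) : ℝ :=
  ∑' d : {d : Fin w.length → ℕ // StrictAnti d ∧ ∀ i, 1 ≤ d i},
    ∏ i, ((d.1 i : ℝ)) ^ (-(w.get i))

namespace MultipleZeta

open Equiv Finset Matrix

variable {r : ℕ}

abbrev PosStrictAnti (r : ℕ) := {d : Fin r → ℕ // StrictAnti d ∧ ∀ i, 1 ≤ d i}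

def zetaTerm (w : Fin r → ℤ) (d : Fin r → ℕ) : ℝ := ∏ i, (d i : ℝ) ^ (-w i)

def powMatrix (w : Fin r → ℤ) (d : Fin r → ℕ) : Matrix (Fin r) (Fin r) ℝ :=
  of fun i j => (d j : ℝ) ^ (-w i)

lemma summable_natCast_zpow_neg {t : ℤ} (ht : 2 ≤ t) :
    Summable fun n : ℕ => (n : ℝ) ^ (-t) := by
  have ht' : (2 : ℝ) ≤ t := by exact_mod_cast ht
  simpa only [Real.rpow_intCast] using
    Real.summable_nat_rpow.mpr (show ((-t : ℤ) : ℝ) < -1 by push_cast; linarith)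

lemma zetaTerm_nonneg (w : Fin r → ℤ) (d : Fin r → ℕ) : 0 ≤ zetaTerm w d :=
  prod_nonneg fun _ _ => by positivity

lemma summable_zetaTerm : ∀ {r : ℕ} {w : Fin r → ℤ}, (∀ i, 2 ≤ w i) → Summable (zetaTerm w)
  | 0, _, _ => .of_finite
  | r + 1, w, hw => by
    have h := (summable_natCast_zpow_neg (hw 0)).mul_of_nonneg
      (summable_zetaTerm (w := Fin.tail w) fun i => hw i.succ)
      (fun _ => by positivity) (zetaTerm_nonneg _)
    refine (Fin.consEquiv fun _ => ℕ).summable_iff.mp (h.congr fun p => ?_)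
    simp only [zetaTerm, Fin.prod_univ_succ, Fin.tail, Function.comp_apply, Fin.consEquiv_apply,
      Fin.cons_zero, Fin.cons_succ]

lemma det_powMatrix (w : Fin r → ℤ) (d : Fin r → ℕ) :
    (powMatrix w d).det = ∑ σ : Perm (Fin r), (Perm.sign σ : ℤ) • zetaTerm (w ∘ σ) d := by
  simp [det_apply, powMatrix, zetaTerm, Units.smul_def]

lemma summable_det_powMatrix {w : Fin r → ℤ} (hw : ∀ i, 2 ≤ w i) :
    Summable fun d : PosStrictAnti r => (powMatrix w d.1).det := by
  simp_rw [det_powMatrix]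
  exact summable_sum fun σ _ => ((summable_zetaTerm fun i => hw (σ i)).subtype _).const_smul _

lemma zetaR_ofFn (f : Fin r → ℤ) : zetaR (List.ofFn f) = ∑' d : PosStrictAnti r, zetaTerm f d := by
  suffices ∀ (l : List ℤ) (h : l.length = r), l.get = f ∘ Fin.cast h →
      zetaR l = ∑' d : PosStrictAnti r, zetaTerm f d from
    this _ List.length_ofFn (funext (List.get_ofFn f))
  rintro l rfl hl
  simp only [zetaR, zetaTerm, hl]
  rfl

lemma zetaR_singleton {x : ℤ} (hx : x ≠ 0) : zetaR [x] = ∑' m : ℕ, (m : ℝ) ^ (-x) := by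
  calc zetaR [x] = ∑' d : PosStrictAnti 1, ((d.1 0 : ℕ) : ℝ) ^ (-x) := by
        simpa [zetaTerm] using zetaR_ofFn ![x]
    _ = ∑' m : ℕ, (m : ℝ) ^ (-x) := by
      refine Function.Injective.tsum_eq (g := fun d : PosStrictAnti 1 => d.1 0)
        (f := fun m : ℕ => (m : ℝ) ^ (-x)) (fun d d' h => Subtype.ext (funext fun i => ?_)) ?_
      · rw [Subsingleton.elim i 0]; exact h
      · intro m hm
        have hm0 : m ≠ 0 := by
          rintro rfl
          exact hm (by simpa using _root_.zero_zpow (G₀ := ℝ) _ (neg_ne_zero.mpr hx))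
        exact ⟨⟨fun _ => m, Subsingleton.strictAnti _, fun _ => Nat.one_le_iff_ne_zero.mpr hm0⟩,
          rfl⟩

lemma sum_sign_smul_zetaR_eq_tsum_det {w : Fin r → ℤ} (hw : ∀ i, 2 ≤ w i) :
    ∑ σ : Perm (Fin r), (Perm.sign σ : ℤ) • zetaR (List.ofFn (w ∘ σ))
      = ∑' d : PosStrictAnti r, (powMatrix w d.1).det := by
  have hσ : ∀ σ : Perm (Fin r), Summable fun d : PosStrictAnti r => zetaTerm (w ∘ σ) d.1 :=
    fun σ => (summable_zetaTerm fun i => hw (σ i)).subtype _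
  simp_rw [zetaR_ofFn, det_powMatrix]
  rw [Summable.tsum_finsetSum fun σ _ => (hσ σ).const_smul _]
  exact sum_congr rfl fun σ _ => ((hσ σ).tsum_const_smul _).symm

def insertionIndex (m : ℕ) (d : Fin r → ℕ) : Fin (r + 1) :=
  ⟨#{i | m < d i}, Nat.lt_succ_of_le ((card_filter_le _ _).trans (card_fin r).le)⟩

lemma lt_iff_castSucc_lt_insertionIndex {d : Fin r → ℕ} (hd : Antitone d) (m : ℕ) (i : Fin r) :
    m < d i ↔ i.castSucc < insertionIndex m d := by
  rw [Fin.lt_def, Fin.val_castSucc, insertionIndex]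
  constructor
  · intro hi
    have : Iic i ⊆ ({j | m < d j} : Finset (Fin r)) := fun j hj =>
      mem_filter.mpr ⟨mem_univ _, hi.trans_le (hd (mem_Iic.mp hj))⟩
    simpa using card_le_card this
  · intro hi
    by_contra hmi
    have : ({j | m < d j} : Finset (Fin r)) ⊆ Iio i := fun j hj =>
      mem_Iio.mpr <| not_le.mp fun hij => hmi ((mem_filter.mp hj).2.trans_le (hd hij))
    simpa using (card_le_card this).trans_lt' hi

lemma eq_of_forall_castSucc_lt_iff {k k' : Fin (r + 1)}
    (h : ∀ i : Fin r, i.castSucc < k ↔ i.castSucc < k') : k = k' := by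
  refine le_antisymm (not_lt.mp fun hlt => ?_) (not_lt.mp fun hlt => ?_)
  · obtain ⟨i, rfl⟩ := Fin.exists_castSucc_eq.mpr (Fin.ne_last_of_lt hlt)
    exact lt_irrefl _ ((h i).mp hlt)
  · obtain ⟨i, rfl⟩ := Fin.exists_castSucc_eq.mpr (Fin.ne_last_of_lt hlt)
    exact lt_irrefl _ ((h i).mpr hlt)

lemma insertionIndex_removeNth {e : Fin (r + 1) → ℕ} (he : StrictAnti e) (k : Fin (r + 1)) :
    insertionIndex (e k) (k.removeNth e) = k := by
  have hanti : Antitone (k.removeNth e) := (he.comp_strictMono k.strictMono_succAbove).antitone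
  refine eq_of_forall_castSucc_lt_iff fun i => ?_
  rw [← lt_iff_castSucc_lt_insertionIndex hanti, ← Fin.succAbove_lt_iff_castSucc_lt]
  exact he.lt_iff_gt

lemma strictAnti_insertNth_insertionIndex {d : Fin r → ℕ} (hd : StrictAnti d) {m : ℕ}
    (hm : ∀ i, d i ≠ m) : StrictAnti ((insertionIndex m d).insertNth m d) := by
  set k := insertionIndex m d
  have hk := lt_iff_castSucc_lt_insertionIndex hd.antitone m
  intro a b hab
  obtain rfl | ⟨i, rfl⟩ := Fin.eq_self_or_eq_succAbove k a <;>
    obtain rfl | ⟨j, rfl⟩ := Fin.eq_self_or_eq_succAbove k b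
  · exact absurd hab (lt_irrefl _)
  · simp only [Fin.insertNth_apply_same, Fin.insertNth_apply_succAbove]
    have hjm : ¬m < d j := fun h =>
      hab.not_gt ((Fin.succAbove_lt_iff_castSucc_lt _ _).mpr ((hk j).mp h))
    exact lt_of_le_of_ne (not_lt.mp hjm) (hm j)
  · simp only [Fin.insertNth_apply_same, Fin.insertNth_apply_succAbove]
    exact (hk i).mpr ((Fin.succAbove_lt_iff_castSucc_lt _ _).mp hab)
  · simp only [Fin.insertNth_apply_succAbove]
    exact hd ((Fin.strictMono_succAbove k).lt_iff_lt.mp hab)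

def removeEntry (q : Fin (r + 1) × PosStrictAnti (r + 1)) : ℕ × PosStrictAnti r :=
  (q.2.1 q.1, ⟨q.1.removeNth q.2.1, q.2.2.1.comp_strictMono q.1.strictMono_succAbove,
    fun _ => q.2.2.2 _⟩)

lemma removeEntry_injective : Function.Injective (removeEntry (r := r)) := by
  rintro ⟨k, e⟩ ⟨k', e'⟩ h
  simp only [removeEntry, Prod.mk.injEq, Subtype.mk.injEq] at h
  obtain ⟨hval, hrem⟩ := h
  obtain rfl : k = k' := by
    rw [← insertionIndex_removeNth e.2.1 k, ← insertionIndex_removeNth e'.2.1 k', hval, hrem]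
  refine Prod.ext rfl (Subtype.ext ?_)
  rw [← Fin.insertNth_self_removeNth k e.1, ← Fin.insertNth_self_removeNth k e'.1, hval, hrem]

lemma mem_range_removeEntry {m : ℕ} (hm : 1 ≤ m) {d : PosStrictAnti r} (hmd : ∀ i, d.1 i ≠ m) :
    (m, d) ∈ Set.range (removeEntry (r := r)) := by
  set k := insertionIndex m d.1
  refine ⟨(k, ⟨k.insertNth m d.1, strictAnti_insertNth_insertionIndex d.2.1 hmd, ?_⟩), ?_⟩
  · exact (Fin.forall_iff_succAbove k).mpr ⟨by simpa using hm, fun i => by simpa using d.2.2 i⟩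
  · simp [removeEntry, Fin.removeNth_insertNth]

lemma det_powMatrix_cons_removeNth (w : Fin (r + 1) → ℤ) (e : Fin (r + 1) → ℕ) (k : Fin (r + 1)) :
    (powMatrix w (Fin.cons (e k) (k.removeNth e))).det = (-1) ^ (k : ℕ) * (powMatrix w e).det := by
  have hperm : (Fin.cons (e k) (k.removeNth e) : Fin (r + 1) → ℕ) = e ∘ k.cycleRange.symm := by
    funext i
    cases i using Fin.cases <;>
      simp [Fin.cycleRange_symm_zero, Fin.cycleRange_symm_succ, Fin.removeNth]
  rw [hperm, show powMatrix w (e ∘ k.cycleRange.symm)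
      = (powMatrix w e).submatrix id k.cycleRange.symm from rfl,
    det_permute', Perm.sign_symm, Fin.sign_cycleRange]
  push_cast
  rfl

lemma det_powMatrix_cons (w : Fin (r + 1) → ℤ) (m : ℕ) (d : Fin r → ℕ) :
    (powMatrix w (Fin.cons m d)).det
      = ∑ j : Fin (r + 1),
          (-1) ^ (j : ℕ) * ((m : ℝ) ^ (-w j) * (powMatrix (w ∘ j.succAbove) d).det) := by
  rw [det_succ_column_zero]
  refine sum_congr rfl fun j _ => ?_
  rw [← mul_assoc]
  rfl

lemma det_powMatrix_cons_zero {w : Fin (r + 1) → ℤ} (hw : ∀ i, w i ≠ 0) (d : Fin r → ℕ) :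
    (powMatrix w (Fin.cons 0 d)).det = 0 :=
  det_eq_zero_of_column_eq_zero 0 fun i => by
    simp [powMatrix, _root_.zero_zpow _ (hw i)]

lemma det_powMatrix_cons_self (w : Fin (r + 1) → ℤ) (d : Fin r → ℕ) (i : Fin r) :
    (powMatrix w (Fin.cons (d i) d)).det = 0 :=
  det_zero_of_column_eq (Fin.succ_ne_zero i).symm fun _ => by simp [powMatrix]

lemma sum_fin_neg_one_pow_of_even (hr : Even r) : ∑ k : Fin (r + 1), (-1 : ℝ) ^ (k : ℕ) = 1 := by
  rw [Fin.sum_univ_eq_sum_range (fun k => (-1 : ℝ) ^ k), neg_one_geom_sum,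
    if_neg (Nat.not_even_iff_odd.mpr hr.add_one)]

lemma tsum_det_powMatrix_cons (hr : Even r) {w : Fin (r + 1) → ℤ} (hw : ∀ i, 2 ≤ w i) :
    ∑' p : ℕ × PosStrictAnti r, (powMatrix w (Fin.cons p.1 p.2.1)).det
      = ∑' e : PosStrictAnti (r + 1), (powMatrix w e.1).det := by
  have hsupp : (Function.support fun p : ℕ × PosStrictAnti r =>
      (powMatrix w (Fin.cons p.1 p.2.1)).det) ⊆ Set.range removeEntry := by
    rintro ⟨m, d⟩ hp
    refine mem_range_removeEntry (Nat.one_le_iff_ne_zero.mpr ?_) fun i hi => hp ?_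
    · rintro rfl
      exact hp (det_powMatrix_cons_zero (fun i => by linarith [hw i]) _)
    · simpa [← hi] using det_powMatrix_cons_self w d.1 i
  calc ∑' p : ℕ × PosStrictAnti r, (powMatrix w (Fin.cons p.1 p.2.1)).det
      = ∑' q : Fin (r + 1) × PosStrictAnti (r + 1), (-1) ^ (q.1 : ℕ) * (powMatrix w q.2.1).det := by
        rw [← removeEntry_injective.tsum_eq hsupp]
        exact tsum_congr fun q => det_powMatrix_cons_removeNth w q.2.1 q.1
    _ = (∑' k : Fin (r + 1), (-1 : ℝ) ^ (k : ℕ)) *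
          ∑' e : PosStrictAnti (r + 1), (powMatrix w e.1).det :=
        (tsum_mul_tsum_of_summable_norm (f := fun k : Fin (r + 1) => (-1 : ℝ) ^ (k : ℕ))
          .of_finite (summable_det_powMatrix hw).norm).symm
    _ = ∑' e : PosStrictAnti (r + 1), (powMatrix w e.1).det := by
        rw [tsum_fintype, sum_fin_neg_one_pow_of_even hr, one_mul]

lemma hasSum_zpow_mul_det_powMatrix {x : ℤ} (hx : 2 ≤ x) {w : Fin r → ℤ} (hw : ∀ i, 2 ≤ w i) :
    HasSum (fun p : ℕ × PosStrictAnti r => (p.1 : ℝ) ^ (-x) * (powMatrix w p.2.1).det)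
      ((∑' m : ℕ, (m : ℝ) ^ (-x)) * ∑' d : PosStrictAnti r, (powMatrix w d.1).det) := by
  have hf := (summable_natCast_zpow_neg hx).norm
  have hg := (summable_det_powMatrix hw).norm
  rw [tsum_mul_tsum_of_summable_norm hf hg]
  exact (summable_mul_of_summable_norm hf hg).hasSum

theorem sum_sign_smul_zetaR_eq_sum_succAbove (hr : Even r) {s : Fin (r + 1) → ℤ}
    (hs : ∀ i, 2 ≤ s i) :
    ∑ σ : Perm (Fin (r + 1)), (Perm.sign σ : ℤ) • zetaR (List.ofFn (s ∘ σ))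
      = ∑ j : Fin (r + 1), (-1 : ℝ) ^ (j : ℕ) * (zetaR [s j] *
          ∑ σ : Perm (Fin r), (Perm.sign σ : ℤ) • zetaR (List.ofFn ((s ∘ j.succAbove) ∘ σ))) := by
  have hs' : ∀ j : Fin (r + 1), ∀ i, 2 ≤ (s ∘ j.succAbove) i := fun j i => hs _
  rw [sum_sign_smul_zetaR_eq_tsum_det hs, ← tsum_det_powMatrix_cons hr hs]
  simp_rw [det_powMatrix_cons]
  refine (hasSum_sum fun j _ =>
    (hasSum_zpow_mul_det_powMatrix (hs j) (hs' j)).mul_left _).tsum_eq.trans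
      (sum_congr rfl fun j _ => ?_)
  rw [zetaR_singleton (by linarith [hs j]), sum_sign_smul_zetaR_eq_tsum_det (hs' j)]

lemma eraseIdxFun_eq_comp_succAbove {α : Type*} (s : Fin (r + 1) → α) (j : Fin (r + 1)) :
    (eraseIdxFun s j : Fin r → α) = s ∘ j.succAbove := by
  funext i
  unfold eraseIdxFun
  split_ifs with h
  · rw [Function.comp_apply, Fin.succAbove_of_castSucc_lt _ _ (Fin.lt_def.mpr h)]
    rfl
  · rw [Function.comp_apply, Fin.succAbove_of_le_castSucc _ _ (Fin.le_def.mpr (not_lt.mp h))]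
    rfl

end MultipleZeta

theorem statement14_general (n : ℕ) (hodd : Odd n)
    (s : Fin n → ℤ) (hs2 : ∀ i, 2 ≤ s i) :
    ∑ σ : Equiv.Perm (Fin n),
        (Equiv.Perm.sign σ : ℤ) • zetaR (List.ofFn (s ∘ σ))
      = ∑ j : Fin n, (-1 : ℝ) ^ (n - 1 - (j : ℕ)) *
          (zetaR [s j] *
            ∑ σ : Equiv.Perm (Fin (n - 1)),
              (Equiv.Perm.sign σ : ℤ) • zetaR (List.ofFn (eraseIdxFun s j ∘ σ))) := by
  obtain ⟨c, rfl⟩ := hodd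
  refine (MultipleZeta.sum_sign_smul_zetaR_eq_sum_succAbove (even_two_mul c) hs2).trans
    (Finset.sum_congr rfl fun j _ => ?_)
  have hsign : (-1 : ℝ) ^ (2 * c + 1 - 1 - (j : ℕ)) = (-1) ^ (j : ℕ) := by
    rw [neg_one_pow_eq_pow_mod_two, neg_one_pow_eq_pow_mod_two (n := (j : ℕ))]
    congr 1
    have := j.isLt
    omega
  rw [hsign, MultipleZeta.eraseIdxFun_eq_comp_succAbove]
  -- `Fin (2 * c + 1 - 1)` and `Fin (2 * c)` agree only up to definitional unfolding
  rfl

theorem statement14 (n : ℕ) (hodd : Odd n) (hpos : 0 < n)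
    (s : Fin n → ℤ) (hs2 : ∀ i, 2 ≤ s i) (hinj : Function.Injective s) :
    ∑ σ : Equiv.Perm (Fin n),
        (Equiv.Perm.sign σ : ℤ) • zetaR (List.ofFn (s ∘ σ))
      = ∑ j : Fin n, (-1 : ℝ) ^ (n - 1 - (j : ℕ)) *
          (zetaR [s j] *
            ∑ σ : Equiv.Perm (Fin (n - 1)),
              (Equiv.Perm.sign σ : ℤ) • zetaR (List.ofFn (eraseIdxFun s j ∘ σ))) :=
  statement14_general n hodd s hs2
end
end

section
/- Let n be an odd positive integer and s_1, …, s_n pairwise distinct nonzero integers. Then Σ_{σ ∈ S_n} sgn(σ)·Z^𝒜(σ(s)) = 0 in 𝒜; that is, for all but finitely many primes p, Σ_{σ ∈ S_n} sgn(σ)·Z_p(s_{σ(1)}, …, s_{σ(n)}) = 0 in 𝔽_p, where sgn(σ) ∈ {±1} is viewed in 𝔽_p via the canonical ring map from ℤ. -/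
/-!
Writing `Z_p(s ∘ σ)` as a sum over strictly decreasing chains `e₀ > ⋯ > e_{n-1}` in `[1, p)`,
the alternating sum becomes `Φ = Σ_e det (e_j ^ (-s_i))_{i,j}`. For large `p` every row of this
matrix sums to zero over `x ∈ [1, p)`, because `Σ_{x=1}^{p-1} x^c = 0` for `0 < |c| < p - 1`;
expanding along the first column, `Σ_x Σ_d det(x, d₀, …, d_{n-2}) = 0`, where `d` runs over the
chains of length `n - 1`. Terms with `x` among the `d_k` have two equal columns. The others are in
bijection with pairs of a chain `e` of length `n` and the position `k` of `x` in `e`, and moving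
`x` to its place costs the sign `(-1)^k`. Hence `0 = (Σ_{k<n} (-1)^k) Φ = Φ` since `n` is odd.
-/

noncomputable section

open scoped Classical

/-- The finite multiple zeta value mod `p`:
`Z_p(s₁, …, s_r) = Σ_{p > n₁ > ⋯ > n_r ≥ 1} n₁^{−s₁}⋯n_r^{−s_r} ∈ 𝔽_p`, the (possibly
negative) powers being computed in the field `𝔽_p = ZMod p`. -/
def Zp (p : ℕ) (hp : p.Prime) (w : List ℤ) : ZMod p :=
  letI : Fact p.Prime := ⟨hp⟩
  ∑ᶠ d ∈ {d : Fin w.length → ℕ | StrictAnti d ∧ ∀ i, 1 ≤ d i ∧ d i < p},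
    ∏ i, ((d i : ZMod p)) ^ (-(w.get i))

open Finset

theorem FiniteField.sum_zpow_eq_zero {K : Type*} [Field K] [Fintype K] {c : ℤ}
    (hlt : c.natAbs < Fintype.card K - 1) : ∑ x : K, x ^ c = 0 := by
  rcases Int.natAbs_eq c with h | h <;> rw [h]
  · simpa only [zpow_natCast] using FiniteField.sum_pow_lt_card_sub_one K _ hlt
  · simp only [zpow_neg, zpow_natCast, ← inv_pow]
    exact (Equiv.sum_comp (Equiv.inv K) (· ^ c.natAbs)).trans
      (FiniteField.sum_pow_lt_card_sub_one K _ hlt)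

theorem ZMod.sum_range_natCast {M : Type*} [AddCommMonoid M] (n : ℕ) [NeZero n]
    (f : ZMod n → M) : ∑ i ∈ range n, f i = ∑ x : ZMod n, f x := by
  refine sum_nbij' (fun i => (i : ZMod n)) ZMod.val (by simp) (fun x _ => ?_) (fun i hi => ?_)
    (fun x _ => ZMod.natCast_zmod_val x) (fun _ _ => rfl)
  · simpa using ZMod.val_lt x
  · exact ZMod.val_cast_of_lt (mem_range.mp hi)

theorem ZMod.sum_Ico_one_zpow_eq_zero {p : ℕ} [Fact p.Prime] {c : ℤ} (hc : c ≠ 0)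
    (hlt : c.natAbs < p - 1) : ∑ x ∈ Ico 1 p, (x : ZMod p) ^ c = 0 := by
  rw [← FiniteField.sum_zpow_eq_zero (K := ZMod p) (by rwa [ZMod.card]),
    ← ZMod.sum_range_natCast, range_eq_Ico, sum_eq_sum_Ico_succ_bot (Fact.out : p.Prime).pos,
    Nat.cast_zero, zero_zpow c hc, zero_add]

section Chains

variable {α : Type*} [LinearOrder α] {m : ℕ}

def chains (r : ℕ) (X : Finset α) : Finset (Fin r → α) :=
  {d ∈ Fintype.piFinset fun _ => X | StrictAnti d}

theorem mem_chains {r : ℕ} {X : Finset α} {d : Fin r → α} :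
    d ∈ chains r X ↔ (∀ i, d i ∈ X) ∧ StrictAnti d := by
  simp [chains]

theorem Zp_ofFn (p : ℕ) [hp : Fact p.Prime] {r : ℕ} (f : Fin r → ℤ) :
    Zp p hp.out (List.ofFn f) =
      ∑ d ∈ chains r (Ico 1 p), ∏ i, (d i : ZMod p) ^ (-f i) := by
  have key : ∀ (w : List ℤ) (h : w.length = r), Zp p hp.out w =
      ∑ d ∈ chains r (Ico 1 p), ∏ i, (d i : ZMod p) ^ (-w.get (Fin.cast h.symm i)) := by
    rintro w rfl
    have hset : {d : Fin w.length → ℕ | StrictAnti d ∧ ∀ i, 1 ≤ d i ∧ d i < p} =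
        ↑(chains w.length (Ico 1 p)) := by
      ext d
      simp [mem_chains, and_comm]
    rw [Zp, hset, finsum_mem_coe_finset]
    rfl
  simp [key _ List.length_ofFn]

theorem Fin.strictAnti_insertNth_iff (q : Fin (m + 1)) (x : α) (f : Fin m → α) :
    StrictAnti (q.insertNth x f) ↔
      StrictAnti f ∧ (∀ i, i.castSucc < q → x < f i) ∧ (∀ i, q ≤ i.castSucc → f i < x) :=
  Fin.strictMono_insertNth_iff (α := αᵒᵈ) q x f

def insertPos (x : α) (d : Fin m → α) : Fin (m + 1) :=
  ⟨#{i | x < d i}, Nat.lt_succ_of_le ((card_filter_le _ _).trans_eq (card_fin m))⟩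

theorem castSucc_lt_insertPos_iff {x : α} {d : Fin m → α} (hd : Antitone d) (i : Fin m) :
    i.castSucc < insertPos x d ↔ x < d i := by
  change (i : ℕ) < #{j | x < d j} ↔ _
  constructor
  · intro h
    by_contra hi
    have : ({j | x < d j} : Finset (Fin m)) ⊆ Iio i := fun j hj => by
      simp only [mem_filter, mem_univ, true_and] at hj
      exact mem_Iio.mpr (lt_of_not_ge fun hij => hi (hj.trans_le (hd hij)))
    exact absurd ((card_le_card this).trans_eq (Fin.card_Iio i)) (not_le.mpr h)
  · intro hi
    have : Iic i ⊆ ({j | x < d j} : Finset (Fin m)) := fun j hj => by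
      simpa using hi.trans_le (hd (mem_Iic.mp hj))
    exact Nat.lt_of_succ_le ((Fin.card_Iic i).symm.trans_le (card_le_card this))

theorem insertPos_removeNth {e : Fin (m + 1) → α} (he : StrictAnti e) (k : Fin (m + 1)) :
    insertPos (e k) (k.removeNth e) = k := by
  ext
  have : ∀ i : Fin m, e k < k.removeNth e i ↔ (i : ℕ) < k := fun i => by
    rw [Fin.removeNth_apply, he.lt_iff_gt, Fin.succAbove_lt_iff_castSucc_lt, Fin.lt_def,
      Fin.val_castSucc]
  simp only [insertPos, this, Fin.card_filter_val_lt]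
  omega

theorem sum_chains_succ_removeNth {M : Type*} [AddCommMonoid M] (X : Finset α)
    (f : α → (Fin m → α) → M) :
    ∑ k : Fin (m + 1), ∑ e ∈ chains (m + 1) X, f (e k) (k.removeNth e) =
      ∑ d ∈ chains m X, ∑ x ∈ X with x ∉ Set.range d, f x d := by
  rw [← sum_product', ← sum_finset_product' ({dx ∈ chains m X ×ˢ X | dx.2 ∉ Set.range dx.1})
    _ _ (by simp [and_assoc])]
  refine sum_nbij' (fun ke => (ke.1.removeNth ke.2, ke.2 ke.1))
    (fun dx => (insertPos dx.2 dx.1, (insertPos dx.2 dx.1).insertNth dx.2 dx.1)) ?_ ?_ ?_ ?_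
    (fun _ _ => rfl)
  · rintro ⟨k, e⟩ hke
    simp only [mem_product, mem_univ, true_and, mem_chains, mem_filter] at hke ⊢
    obtain ⟨hX, he⟩ := hke
    refine ⟨⟨⟨fun i => hX _, he.comp_strictMono (Fin.strictMono_succAbove k)⟩, hX k⟩, ?_⟩
    rintro ⟨i, hi⟩
    exact Fin.succAbove_ne k i (he.injective hi)
  · rintro ⟨d, x⟩ hdx
    simp only [mem_product, mem_univ, true_and, mem_chains, mem_filter] at hdx ⊢
    obtain ⟨⟨⟨hX, hd⟩, hx⟩, hxd⟩ := hdx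
    have hpos := castSucc_lt_insertPos_iff (x := x) hd.antitone
    refine ⟨fun j => ?_, (Fin.strictAnti_insertNth_iff _ _ _).mpr
      ⟨hd, fun i hi => (hpos i).mp hi, fun i hi => ?_⟩⟩
    · cases j using Fin.succAboveCases (insertPos x d) <;> simp [hx, hX]
    · exact (not_lt.mp (mt (hpos i).mpr hi.not_gt)).lt_of_ne fun h => hxd ⟨i, h⟩
  · rintro ⟨k, e⟩ hke
    simp only [mem_product, mem_chains] at hke
    simp [insertPos_removeNth hke.2.2]
  · rintro ⟨d, x⟩ -
    simp

end Chains

section Determinant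

variable {ι α R : Type*} {m : ℕ}

def evalMatrix (g : ι → α → R) (e : ι → α) : Matrix ι ι R :=
  Matrix.of fun i j => g i (e j)

@[simp]
theorem evalMatrix_apply (g : ι → α → R) (e : ι → α) (i j : ι) :
    evalMatrix g e i j = g i (e j) :=
  rfl

variable [CommRing R]

theorem det_evalMatrix [Fintype ι] [DecidableEq ι] (g : ι → α → R) (e : ι → α) :
    (evalMatrix g e).det = ∑ σ : Equiv.Perm ι, (Equiv.Perm.sign σ : ℤ) • ∏ i, g (σ i) (e i) := by
  simp [Matrix.det_apply, Units.smul_def]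

theorem sum_det_evalMatrix_cons_eq_zero {X : Finset α} (g : Fin (m + 1) → α → R)
    (hg : ∀ i, ∑ x ∈ X, g i x = 0) (d : Fin m → α) :
    ∑ x ∈ X, (evalMatrix g (Fin.cons x d)).det = 0 := by
  simp only [Matrix.det_succ_column_zero, evalMatrix_apply, Fin.cons_zero, Matrix.submatrix,
    Fin.cons_succ]
  rw [sum_comm]
  refine sum_eq_zero fun i _ => ?_
  rw [← sum_mul, ← mul_sum, hg, mul_zero, zero_mul]

theorem det_evalMatrix_cons_of_mem_range (g : Fin (m + 1) → α → R) {x : α} {d : Fin m → α}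
    (hx : x ∈ Set.range d) : (evalMatrix g (Fin.cons x d)).det = 0 := by
  obtain ⟨k, rfl⟩ := hx
  exact Matrix.det_zero_of_column_eq (Fin.succ_ne_zero k).symm fun i => by simp

theorem det_evalMatrix_cons_removeNth (g : Fin (m + 1) → α → R) (e : Fin (m + 1) → α)
    (k : Fin (m + 1)) :
    (evalMatrix g (Fin.cons (e k) (k.removeNth e))).det =
      (-1) ^ (k : ℕ) * (evalMatrix g e).det := by
  rw [Fin.cons_removeNth_eq_comp_cycleRange_symm]
  change ((evalMatrix g e).submatrix id k.cycleRange.symm).det = _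
  simp [Matrix.det_permute', Fin.sign_cycleRange]

end Determinant

theorem sum_chains_det_evalMatrix_eq_zero {α R : Type*} [LinearOrder α] [CommRing R] {m : ℕ}
    (hm : Even m) {X : Finset α} (g : Fin (m + 1) → α → R) (hg : ∀ i, ∑ x ∈ X, g i x = 0) :
    ∑ e ∈ chains (m + 1) X, (evalMatrix g e).det = 0 := by
  have hsign : ∑ k : Fin (m + 1), (-1 : R) ^ (k : ℕ) = 1 := by
    simp [Fin.sum_neg_one_pow, Nat.even_add_one, hm]
  calc ∑ e ∈ chains (m + 1) X, (evalMatrix g e).det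
      = ∑ k : Fin (m + 1), ∑ e ∈ chains (m + 1) X,
          (evalMatrix g (Fin.cons (e k) (k.removeNth e))).det := by
        simp only [det_evalMatrix_cons_removeNth, ← mul_sum]
        rw [← sum_mul, hsign, one_mul]
    _ = ∑ d ∈ chains m X, ∑ x ∈ X with x ∉ Set.range d, (evalMatrix g (Fin.cons x d)).det :=
        sum_chains_succ_removeNth X fun x d => (evalMatrix g (Fin.cons x d)).det
    _ = ∑ d ∈ chains m X, ∑ x ∈ X, (evalMatrix g (Fin.cons x d)).det := by
        refine sum_congr rfl fun d _ => ?_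
        rw [← sum_filter_not_add_sum_filter X (· ∈ Set.range d),
          sum_eq_zero fun x hx => det_evalMatrix_cons_of_mem_range g (mem_filter.mp hx).2,
          add_zero]
    _ = 0 := sum_eq_zero fun d _ => sum_det_evalMatrix_cons_eq_zero g hg d

theorem statement15_general (n : ℕ) (hodd : Odd n)
    (s : Fin n → ℤ) (hnz : ∀ i, s i ≠ 0) :
    ∃ T : Finset ℕ, ∀ p : ℕ, ∀ hp : p.Prime, p ∉ T →
      ∑ σ : Equiv.Perm (Fin n),
        (Equiv.Perm.sign σ : ℤ) • Zp p hp (List.ofFn (s ∘ σ)) = 0 := by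
  obtain ⟨m, rfl⟩ := hodd
  let N := univ.sup fun i => (s i).natAbs
  refine ⟨range (N + 2), fun p hp hpT => ?_⟩
  have : Fact p.Prime := ⟨hp⟩
  have hNp : N + 2 ≤ p := not_lt.mp (mt mem_range.mpr hpT)
  have hg : ∀ i, ∑ x ∈ Ico 1 p, (x : ZMod p) ^ (-s i) = 0 := fun i => by
    have hsi : (s i).natAbs ≤ N := le_sup (f := fun i => (s i).natAbs) (mem_univ i)
    exact ZMod.sum_Ico_one_zpow_eq_zero (neg_ne_zero.mpr (hnz i)) (by rw [Int.natAbs_neg]; omega)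
  simp only [Function.comp_apply, Zp_ofFn, smul_sum]
  rw [sum_comm]
  simp only [← det_evalMatrix (fun i (x : ℕ) => (x : ZMod p) ^ (-s i))]
  exact sum_chains_det_evalMatrix_eq_zero (even_two_mul m) _ hg

theorem statement15 (n : ℕ) (hodd : Odd n) (hpos : 0 < n)
    (s : Fin n → ℤ) (hinj : Function.Injective s) (hnz : ∀ i, s i ≠ 0) :
    ∃ T : Finset ℕ, ∀ p : ℕ, ∀ hp : p.Prime, p ∉ T →
      ∑ σ : Equiv.Perm (Fin n),
        (Equiv.Perm.sign σ : ℤ) • Zp p hp (List.ofFn (s ∘ σ)) = 0 :=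
  statement15_general n hodd s hnz

end
end
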